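/- The Fourier representation of the smeared density for the Gaussian form factor recovers a Gaussian: (1/(2π²)) ∫₀^∞ k sin(kr)/(r e^{ℓ²k²}) dk = e^{-r²/(4ℓ²)}/(8π^{3/2}ℓ³) for all r > 0. -/

import Mathlib

/-!
Differentiating `sin (k r) e^{-a k²}` and integrating over `ℝ` (the boundary terms vanish) gives
`2a ∫ k sin (k r) e^{-a k²} = r ∫ cos (k r) e^{-a k²}`, and the right-hand integral is the real
part of the Fourier transform of the Gaussian, `√(π/a) e^{-r²/(4a)}`. The integrand on the left is
even, so its integral over `(0, ∞)` is half of that over `ℝ`; now take `a = ℓ²`.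
-/

open Real MeasureTheory

lemma integral_cos_mul_exp_neg_mul_sq {a : ℝ} (ha : 0 < a) (r : ℝ) :
    ∫ x : ℝ, cos (x * r) * exp (-a * x ^ 2) = √(π / a) * exp (-r ^ 2 / (4 * a)) := by
  have hb : 0 < (a : ℂ).re := by simpa using ha
  have hint : Integrable fun x : ℝ =>
      Complex.exp (Complex.I * r * x) * Complex.exp (-a * x ^ 2) := by
    simpa only [← Complex.exp_add, add_comm, zero_add] using
      integrable_cexp_quadratic hb (Complex.I * r) 0
  have hre (x : ℝ) : (Complex.exp (Complex.I * r * x) * Complex.exp (-a * x ^ 2)).re =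
      cos (x * r) * exp (-a * x ^ 2) := by
    rw [show Complex.I * r * x = ((x * r : ℝ) : ℂ) * Complex.I by push_cast; ring,
      show -(a : ℂ) * x ^ 2 = ((-a * x ^ 2 : ℝ) : ℂ) by push_cast; ring,
      ← Complex.ofReal_exp, Complex.re_mul_ofReal, Complex.exp_ofReal_mul_I_re]
  have hsqrt : ((π : ℂ) / a) ^ (1 / 2 : ℂ) = (√(π / a) : ℝ) := by
    rw [sqrt_eq_rpow, Complex.ofReal_cpow (by positivity)]
    push_cast
    ring_nf
  have hexp : Complex.exp (-(r : ℂ) ^ 2 / (4 * a)) = (exp (-r ^ 2 / (4 * a)) : ℝ) := by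
    push_cast
    rfl
  simpa only [hre, hsqrt, hexp, RCLike.re_to_complex, ← Complex.ofReal_mul, Complex.ofReal_re]
    using (integral_re hint).trans (congrArg Complex.re (fourierIntegral_gaussian hb r))

section

variable {a : ℝ} (r : ℝ)

lemma integrable_sin_mul_exp_neg_mul_sq (ha : 0 < a) :
    Integrable fun x : ℝ => sin (x * r) * exp (-a * x ^ 2) :=
  (integrable_exp_neg_mul_sq ha).bdd_mul (by fun_prop) (.of_forall fun _ => abs_sin_le_one _)

lemma integrable_cos_mul_exp_neg_mul_sq (ha : 0 < a) :
    Integrable fun x : ℝ => cos (x * r) * exp (-a * x ^ 2) :=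
  (integrable_exp_neg_mul_sq ha).bdd_mul (by fun_prop) (.of_forall fun _ => abs_cos_le_one _)

lemma integrable_mul_sin_mul_exp_neg_mul_sq (ha : 0 < a) :
    Integrable fun x : ℝ => x * sin (x * r) * exp (-a * x ^ 2) := by
  simpa only [mul_left_comm, mul_assoc] using (integrable_mul_exp_neg_mul_sq ha).bdd_mul
    (f := fun x => sin (x * r)) (by fun_prop) (.of_forall fun _ => abs_sin_le_one _)

lemma hasDerivAt_sin_mul_exp_neg_mul_sq (x : ℝ) :
    HasDerivAt (fun x => sin (x * r) * exp (-a * x ^ 2))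
      (r * (cos (x * r) * exp (-a * x ^ 2)) - 2 * a * (x * sin (x * r) * exp (-a * x ^ 2))) x := by
  refine ((hasDerivAt_mul_const r).sin.mul
    ((hasDerivAt_pow 2 x).const_mul (-a)).exp).congr_deriv ?_
  push_cast
  ring

lemma integral_mul_sin_mul_exp_neg_mul_sq (ha : 0 < a) :
    ∫ x : ℝ, x * sin (x * r) * exp (-a * x ^ 2) =
      r / (2 * a) * (√(π / a) * exp (-r ^ 2 / (4 * a))) := by
  have hcos := (integrable_cos_mul_exp_neg_mul_sq r ha).const_mul r
  have hsin := (integrable_mul_sin_mul_exp_neg_mul_sq r ha).const_mul (2 * a)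
  have h := integral_eq_zero_of_hasDerivAt_of_integrable (hasDerivAt_sin_mul_exp_neg_mul_sq r)
    (hcos.sub hsin) (integrable_sin_mul_exp_neg_mul_sq r ha)
  rw [integral_sub hcos hsin, integral_const_mul, integral_const_mul,
    integral_cos_mul_exp_neg_mul_sq ha] at h
  rw [div_mul_eq_mul_div, eq_div_iff (by positivity)]
  linear_combination -h

lemma integral_Ioi_mul_sin_mul_exp_neg_mul_sq (ha : 0 < a) :
    ∫ x in Set.Ioi 0, x * sin (x * r) * exp (-a * x ^ 2) =
      r / (4 * a) * √(π / a) * exp (-r ^ 2 / (4 * a)) := by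
  have heven (x : ℝ) :
      |x| * sin (|x| * r) * exp (-a * |x| ^ 2) = x * sin (x * r) * exp (-a * x ^ 2) := by
    rcases abs_cases x with ⟨h, -⟩ | ⟨h, -⟩ <;> simp [h, neg_mul, sin_neg]
  have h := integral_comp_abs (f := fun x => x * sin (x * r) * exp (-a * x ^ 2))
  simp only [heven, integral_mul_sin_mul_exp_neg_mul_sq r ha] at h
  linear_combination -h / 2

end

theorem stmt_15 (ℓ r : ℝ) (hℓ : 0 < ℓ) (hr : 0 < r) :
    (1 / (2 * π ^ 2)) * ∫ k in Set.Ioi (0 : ℝ),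
        k * Real.sin (k * r) / (r * Real.exp (ℓ ^ 2 * k ^ 2)) =
      Real.exp (-r ^ 2 / (4 * ℓ ^ 2)) / (8 * π ^ ((3 : ℝ) / 2) * ℓ ^ 3) := by
  have hintegrand (k : ℝ) : k * sin (k * r) / (r * exp (ℓ ^ 2 * k ^ 2)) =
      k * sin (k * r) * exp (-ℓ ^ 2 * k ^ 2) / r := by
    rw [neg_mul, exp_neg]
    field_simp
  have hsqrt : √(π / ℓ ^ 2) = √π / ℓ := by rw [sqrt_div pi_pos.le, sqrt_sq hℓ.le]
  have hpow : π ^ ((3 : ℝ) / 2) = π * √π := by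
    rw [sqrt_eq_rpow, ← rpow_one_add' pi_pos.le (by norm_num)]
    norm_num
  simp_rw [hintegrand]
  rw [integral_div, integral_Ioi_mul_sin_mul_exp_neg_mul_sq r (by positivity), hsqrt, hpow]
  field_simp
  rw [sq_sqrt pi_pos.le]
  ring
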